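/- Let R₈ ⊆ ℝ^8 be the set of roots of the E₈ lattice: the 240 vectors v with v₁² + ⋯ + v₈² = 2, such that either all coordinates v_i are integers or all coordinates v_i are in ℤ + 1/2, and v₁ + ⋯ + v₈ is an even integer. Let R₇ = {v ∈ R₈ : v₇ = v₈} be the set of roots of R₈ orthogonal to the root e₇ − e₈ (a copy of the root system of E₇, consisting of 126 vectors). Then R₇ can be partitioned into 9 pairwise disjoint sets, each of the form {v₁, …, v₇, −v₁, …, −v₇} with ⟨v_i, v_j⟩ = 2·δ_{ij}; hence the maximum number of pairwise disjoint 2-frames in the roots of E₇ is 9. -/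
import Mathlib

/-- The set of roots of the `E₈` lattice: the 240 vectors `v ∈ ℝ^8` of squared norm `2`
whose coordinates are either all integers or all in `ℤ + 1/2`, and whose coordinate sum
is an even integer. -/
def E8Roots : Set (Fin 8 → ℝ) :=
  {v | (∑ t, (v t) ^ 2 = 2) ∧
    ((∀ t, ∃ n : ℤ, v t = n) ∨ (∀ t, ∃ n : ℤ, v t = n + 1 / 2)) ∧
    (∃ m : ℤ, ∑ t, v t = 2 * m)}

/-- A `2`-frame of rank `r` in `ℝ^8`: a set of the form `{v₁, …, v_r, -v₁, …, -v_r}`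
with `⟨vᵢ, vⱼ⟩ = 2·δᵢⱼ`. -/
def Is2FrameR (r : ℕ) (S : Set (Fin 8 → ℝ)) : Prop :=
  ∃ v : Fin r → (Fin 8 → ℝ),
    (∀ i j, ∑ t, v i t * v j t = if i = j then (2 : ℝ) else 0) ∧
    S = Set.range v ∪ Set.range fun i => -(v i)

def Nmat : Fin 9 → Fin 7 → Fin 8 → ℤ :=
  ![![![2, 2, 0, 0, 0, 0, 0, 0], ![2, -2, 0, 0, 0, 0, 0, 0], ![0, 0, 2, 2, 0, 0, 0, 0], ![0, 0, 2, -2, 0, 0, 0, 0], ![0, 0, 0, 0, 2, 2, 0, 0], ![0, 0, 0, 0, 2, -2, 0, 0], ![0, 0, 0, 0, 0, 0, 2, 2]],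
    ![![2, 0, 2, 0, 0, 0, 0, 0], ![0, 2, 0, 0, 2, 0, 0, 0], ![0, 0, 0, 2, 0, -2, 0, 0], ![1, 1, -1, 1, -1, 1, 1, 1], ![1, 1, -1, -1, -1, -1, -1, -1], ![1, -1, -1, 1, 1, 1, -1, -1], ![1, -1, -1, -1, 1, -1, 1, 1]],
    ![![2, 0, -2, 0, 0, 0, 0, 0], ![0, 2, 0, 0, 0, 2, 0, 0], ![0, 0, 0, 2, 2, 0, 0, 0], ![1, 1, 1, 1, -1, -1, 1, 1], ![1, 1, 1, -1, 1, -1, -1, -1], ![1, -1, 1, 1, -1, 1, -1, -1], ![1, -1, 1, -1, 1, 1, 1, 1]],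
    ![![2, 0, 0, 2, 0, 0, 0, 0], ![0, 2, 0, 0, -2, 0, 0, 0], ![0, 0, 2, 0, 0, 2, 0, 0], ![1, 1, 1, -1, 1, -1, 1, 1], ![1, 1, -1, -1, 1, 1, -1, -1], ![1, -1, 1, -1, -1, -1, -1, -1], ![1, -1, -1, -1, -1, 1, 1, 1]],
    ![![2, 0, 0, -2, 0, 0, 0, 0], ![0, 2, 0, 0, 0, -2, 0, 0], ![0, 0, 2, 0, -2, 0, 0, 0], ![1, 1, 1, 1, 1, 1, 1, 1], ![1, 1, -1, 1, -1, 1, -1, -1], ![1, -1, 1, 1, 1, -1, -1, -1], ![1, -1, -1, 1, -1, -1, 1, 1]],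
    ![![2, 0, 0, 0, 2, 0, 0, 0], ![0, 2, 0, 2, 0, 0, 0, 0], ![0, 0, 2, 0, 0, -2, 0, 0], ![1, 1, 1, -1, -1, 1, -1, -1], ![1, 1, -1, -1, -1, -1, 1, 1], ![1, -1, 1, 1, -1, 1, 1, 1], ![1, -1, -1, 1, -1, -1, -1, -1]],
    ![![2, 0, 0, 0, -2, 0, 0, 0], ![0, 2, 2, 0, 0, 0, 0, 0], ![0, 0, 0, 2, 0, 2, 0, 0], ![1, 1, -1, 1, 1, -1, -1, -1], ![1, 1, -1, -1, 1, 1, 1, 1], ![1, -1, 1, 1, 1, -1, 1, 1], ![1, -1, 1, -1, 1, 1, -1, -1]],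
    ![![2, 0, 0, 0, 0, 2, 0, 0], ![0, 2, 0, -2, 0, 0, 0, 0], ![0, 0, 2, 0, 2, 0, 0, 0], ![1, 1, 1, 1, -1, -1, -1, -1], ![1, 1, -1, 1, 1, -1, 1, 1], ![1, -1, 1, -1, -1, -1, 1, 1], ![1, -1, -1, -1, 1, -1, -1, -1]],
    ![![2, 0, 0, 0, 0, -2, 0, 0], ![0, 2, -2, 0, 0, 0, 0, 0], ![0, 0, 0, 2, -2, 0, 0, 0], ![1, 1, 1, 1, 1, 1, -1, -1], ![1, 1, 1, -1, -1, 1, 1, 1], ![1, -1, -1, 1, 1, 1, 1, 1], ![1, -1, -1, -1, -1, 1, -1, -1]]]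

/-- The real vectors: the rows of `Nmat` divided by two. -/
noncomputable def Vv (a : Fin 9) (i : Fin 7) : Fin 8 → ℝ := fun t => (Nmat a i t : ℝ) / 2

/-- The nine frames. -/
def Ff (a : Fin 9) : Set (Fin 8 → ℝ) := Set.range (Vv a) ∪ Set.range fun i => -(Vv a i)

lemma D1 : ∀ a i j, ∑ t, Nmat a i t * Nmat a j t = if i = j then (8:ℤ) else 0 := by decide

lemma D2 : ∀ a b : Fin 9, a ≠ b → ∀ i j, Nmat a i ≠ Nmat b j ∧ Nmat a i ≠ -(Nmat b j) := by
  decide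

lemma D3 : ∀ a i, ((∀ t, (2:ℤ) ∣ Nmat a i t) ∨ (∀ t, ¬ (2:ℤ) ∣ Nmat a i t)) ∧
    (4:ℤ) ∣ ∑ t, Nmat a i t ∧ Nmat a i 6 = Nmat a i 7 ∧ ∑ t, (Nmat a i t)^2 = 8 := by decide

set_option maxHeartbeats 16000000 in
set_option maxRecDepth 1000000 in
lemma D4 : ∀ a b c d e g h : Fin 3,
    (∑ t, ((![a,b,c,d,e,g,h,h] t : ℤ)-1)^2 = 2) →
    ∃ p i, (fun t => 2*((![a,b,c,d,e,g,h,h] t : ℤ)-1)) = Nmat p i ∨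
           (fun t => 2*((![a,b,c,d,e,g,h,h] t : ℤ)-1)) = -(Nmat p i) := by decide

set_option maxHeartbeats 4000000 in
set_option maxRecDepth 100000 in
lemma D5 : ∀ f : Fin 8 → Fin 2, ((4:ℤ) ∣ ∑ t, (2*(f t : ℤ)-1)) → f 6 = f 7 →
    ∃ p i, (fun t => 2*(f t : ℤ)-1) = Nmat p i ∨
           (fun t => 2*(f t : ℤ)-1) = -(Nmat p i) := by decide

lemma castv_inj {M₁ M₂ : Fin 8 → ℤ}
    (h : (fun t => (M₁ t : ℝ)/2) = fun t => (M₂ t : ℝ)/2) : M₁ = M₂ := by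
  funext t
  have h' := congrFun h t
  have : (M₁ t : ℝ) = (M₂ t : ℝ) := by field_simp at h'; exact_mod_cast h'
  exact_mod_cast this

lemma negV (a : Fin 9) (i : Fin 7) :
    -(Vv a i) = fun t => ((-(Nmat a i)) t : ℝ)/2 := by
  funext t; simp [Vv, neg_div]

lemma mem_E7 (M : Fin 8 → ℤ) (h1 : ∑ t, (M t)^2 = 8)
    (h2 : (∀ t, (2:ℤ) ∣ M t) ∨ (∀ t, ¬ (2:ℤ) ∣ M t))
    (h3 : (4:ℤ) ∣ ∑ t, M t) (h4 : M 6 = M 7) :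
    (fun t => (M t : ℝ)/2) ∈ {v ∈ E8Roots | v 6 = v 7} := by
  refine ⟨⟨?_, ?_, ?_⟩, ?_⟩
  · have hc : ((∑ t, (M t)^2 : ℤ) : ℝ) = 8 := by exact_mod_cast congrArg (Int.cast : ℤ → ℝ) h1
    push_cast at hc
    have key : ∑ t, ((M t : ℝ)/2)^2 = (∑ t, ((M t : ℝ))^2)/4 := by
      rw [Finset.sum_div]; exact Finset.sum_congr rfl fun t _ => by ring
    rw [key, hc]; norm_num
  · rcases h2 with h | h
    · exact Or.inl fun t => by
        obtain ⟨k, hk⟩ := h t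
        exact ⟨k, by show (M t : ℝ)/2 = (k : ℝ); rw [hk]; push_cast; ring⟩
    · exact Or.inr fun t => by
        have hodd : Odd (M t) := Int.not_even_iff_odd.mp (fun he => h t he.two_dvd)
        obtain ⟨k, hk⟩ := hodd
        exact ⟨k, by show (M t : ℝ)/2 = (k : ℝ) + 1/2; rw [hk]; push_cast; ring⟩
  · obtain ⟨m, hm⟩ := h3
    refine ⟨m, ?_⟩
    have hc : ((∑ t, M t : ℤ) : ℝ) = ((4*m : ℤ) : ℝ) := by rw [hm]
    push_cast at hc
    have key : ∑ t, (M t : ℝ)/2 = (∑ t, ((M t : ℝ)))/2 := by rw [Finset.sum_div]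
    rw [key, hc]; ring
  · show (M 6 : ℝ)/2 = (M 7 : ℝ)/2
    rw [h4]

lemma inner_V (a : Fin 9) : ∀ i j, ∑ t, Vv a i t * Vv a j t = if i = j then (2:ℝ) else 0 := by
  intro i j
  have h := D1 a i j
  have key : ∑ t, Vv a i t * Vv a j t = (∑ t, ((Nmat a i t : ℝ) * (Nmat a j t : ℝ)))/4 := by
    rw [Finset.sum_div]; exact Finset.sum_congr rfl fun t _ => by unfold Vv; ring
  have hcast : (∑ t, ((Nmat a i t : ℝ) * (Nmat a j t : ℝ)))
      = ((∑ t, Nmat a i t * Nmat a j t : ℤ) : ℝ) := by push_cast; rfl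
  rw [key, hcast, h]
  split_ifs <;> norm_num

lemma Ff_frame (a : Fin 9) : Is2FrameR 7 (Ff a) := ⟨Vv a, inner_V a, rfl⟩

lemma Ff_disj : ∀ a b : Fin 9, a ≠ b → Disjoint (Ff a) (Ff b) := by
  intro a b hab
  rw [Set.disjoint_left]
  rintro x (⟨i, rfl⟩ | ⟨i, rfl⟩) hx <;> rcases hx with ⟨j, hj⟩ | ⟨j, hj⟩
  · exact (D2 b a (Ne.symm hab) j i).1 (castv_inj hj)
  · have hj' : (fun t => ((-(Nmat b j)) t : ℝ)/2) = fun t => (Nmat a i t : ℝ)/2 := by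
      rw [← negV]; exact hj
    exact (D2 a b hab i j).2 (castv_inj hj').symm
  · have hj' : (fun t => (Nmat b j t : ℝ)/2) = fun t => ((-(Nmat a i)) t : ℝ)/2 := by
      rw [← negV]; exact hj
    exact (D2 b a (Ne.symm hab) j i).2 (castv_inj hj')
  · have hj2 : Vv b j = Vv a i := neg_injective hj
    exact (D2 b a (Ne.symm hab) j i).1 (castv_inj hj2)

lemma Ff_sub (a : Fin 9) : Ff a ⊆ {v ∈ E8Roots | v 6 = v 7} := by
  rintro x (⟨i, rfl⟩ | ⟨i, rfl⟩)
  · exact mem_E7 (Nmat a i) (D3 a i).2.2.2 (D3 a i).1 (D3 a i).2.1 (D3 a i).2.2.1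
  · show -(Vv a i) ∈ {v ∈ E8Roots | v 6 = v 7}
    rw [negV]
    refine mem_E7 (-(Nmat a i)) ?_ ?_ ?_ ?_
    · simpa using (D3 a i).2.2.2
    · rcases (D3 a i).1 with h | h
      · exact Or.inl fun t => by simpa using (dvd_neg).mpr (h t)
      · exact Or.inr fun t => by simpa using fun hd => h t ((dvd_neg).mp hd)
    · have hs : ∑ t, (-(Nmat a i)) t = -∑ t, Nmat a i t := by simp
      rw [hs]; exact (dvd_neg).mpr (D3 a i).2.1
    · simp [(D3 a i).2.2.1]

lemma root_mem (v : Fin 8 → ℝ) (hv : v ∈ E8Roots) (h67 : v 6 = v 7) : v ∈ ⋃ a, Ff a := by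
  obtain ⟨hsum, hint, hev⟩ := hv
  rcases hint with hint | hint
  · -- integer case
    choose n hn using hint
    have hs2 : ∑ t, (n t)^2 = 2 := by
      have h : ∑ t, ((n t : ℝ))^2 = 2 := by
        rw [← hsum]; exact Finset.sum_congr rfl fun t _ => by rw [hn t]
      exact_mod_cast h
    have hb : ∀ t, -1 ≤ n t ∧ n t ≤ 1 := by
      intro t
      have h1 : (n t)^2 ≤ 2 := by
        have h := Finset.single_le_sum (f := fun t => (n t)^2)
          (fun s _ => sq_nonneg _) (Finset.mem_univ t)
        rw [hs2] at h; exact h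
      constructor <;> nlinarith
    have h67' : n 6 = n 7 := by
      have h : (n 6 : ℝ) = (n 7 : ℝ) := by rw [← hn 6, ← hn 7]; exact h67
      exact_mod_cast h
    set f : Fin 8 → Fin 3 := fun t => ⟨(n t + 1).toNat, by have := hb t; omega⟩ with hf
    have hft : ∀ t, ((f t : ℤ)) - 1 = n t := by
      intro t; have := hb t; simp only [hf]; omega
    have hfe : ![f 0, f 1, f 2, f 3, f 4, f 5, f 6, f 6] = f := by
      have h67f : f 6 = f 7 := Fin.ext (by simp only [hf]; rw [h67'])
      funext t
      fin_cases t <;> first | rfl | exact h67f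
    have hsum' : ∑ t, ((![f 0, f 1, f 2, f 3, f 4, f 5, f 6, f 6] t : ℤ)-1)^2 = 2 := by
      rw [hfe, ← hs2]; exact Finset.sum_congr rfl fun t _ => by rw [hft t]
    obtain ⟨p, i, hc⟩ := D4 (f 0) (f 1) (f 2) (f 3) (f 4) (f 5) (f 6) hsum'
    rw [hfe] at hc
    have hM : (fun t => 2*((f t : ℤ)-1)) = fun t => 2 * n t := by
      funext t; rw [hft t]
    rw [hM] at hc
    refine Set.mem_iUnion.mpr ⟨p, ?_⟩
    rcases hc with hc | hc
    · refine Or.inl ⟨i, ?_⟩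
      funext t
      have h := congrFun hc t
      show (Nmat p i t : ℝ)/2 = v t
      rw [← h, hn t]; push_cast; ring
    · refine Or.inr ⟨i, ?_⟩
      funext t
      have h := congrFun hc t
      show -((Nmat p i t : ℝ)/2) = v t
      have h' : Nmat p i t = -(2 * n t) := by
        have := congrFun hc t; simp only [Pi.neg_apply] at this; omega
      rw [h', hn t]; push_cast; ring
  · -- half-integer case
    choose m hm using hint
    have hs8 : ∑ t, (2*m t+1)^2 = 8 := by
      have h : ∑ t, ((2*m t+1 : ℤ) : ℝ)^2 = 8 := by
        have e : ∀ t : Fin 8, ((2*m t+1 : ℤ) : ℝ)^2 = 4 * (v t)^2 := by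
          intro t; rw [hm t]; push_cast; ring
        calc ∑ t, ((2*m t+1 : ℤ) : ℝ)^2 = ∑ t, 4*(v t)^2 :=
              Finset.sum_congr rfl fun t _ => e t
          _ = 4 * ∑ t, (v t)^2 := by rw [Finset.mul_sum]
          _ = 8 := by rw [hsum]; norm_num
      exact_mod_cast h
    have hb : ∀ t, m t = 0 ∨ m t = -1 := by
      intro t
      have h1 : ∀ s : Fin 8, 1 ≤ (2*m s+1)^2 := by
        intro s
        rcases le_or_gt 0 (m s) with h | h
        · nlinarith
        · nlinarith
      have h2 : (2*m t+1)^2 ≤ 1 := by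
        have hsplit := Finset.add_sum_erase Finset.univ (fun s => (2*m s+1)^2)
          (Finset.mem_univ t)
        rw [hs8] at hsplit
        have hsplit' : (2*m t+1)^2 + ∑ x ∈ Finset.univ.erase t, (2*m x+1)^2 = 8 := hsplit
        have hge : (7:ℤ) ≤ ∑ s ∈ Finset.univ.erase t, (2*m s+1)^2 := by
          have h := Finset.card_nsmul_le_sum (Finset.univ.erase t)
            (fun s => (2*m s+1)^2) 1 (fun s _ => h1 s)
          simpa [Finset.card_erase_of_mem] using h
        linarith [hsplit']
      have h3 : -1 ≤ 2*m t+1 ∧ 2*m t+1 ≤ 1 := by constructor <;> nlinarith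
      omega
    have h67' : m 6 = m 7 := by
      have h : (m 6 : ℝ) + 1/2 = (m 7 : ℝ) + 1/2 := by rw [← hm 6, ← hm 7]; exact h67
      have h2 : (m 6 : ℝ) = (m 7 : ℝ) := by linarith
      exact_mod_cast h2
    set f : Fin 8 → Fin 2 := fun t => ⟨(m t + 1).toNat, by have := hb t; omega⟩ with hf
    have hft : ∀ t, 2*(f t : ℤ) - 1 = 2*m t+1 := by
      intro t; have := hb t; simp only [hf]; omega
    obtain ⟨c, hc0⟩ := hev
    have hdvd : (4:ℤ) ∣ ∑ t, (2*(f t : ℤ)-1) := by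
      refine ⟨c, ?_⟩
      have h : ((∑ t, (2*(f t : ℤ)-1) : ℤ) : ℝ) = ((4*c : ℤ) : ℝ) := by
        push_cast
        have e : ∑ t, (2*((f t : ℕ) : ℝ)-1) = ∑ t, 2 * v t := by
          refine Finset.sum_congr rfl fun t _ => ?_
          have h1 : ((f t : ℕ) : ℝ) = (m t : ℝ) + 1 := by
            have h2 : ((f t : ℤ)) = m t + 1 := by have := hft t; omega
            exact_mod_cast h2
          rw [h1, hm t]; ring
        rw [e, ← Finset.mul_sum, hc0]; ring
      exact_mod_cast h
    have h67f : f 6 = f 7 := Fin.ext (by simp only [hf]; rw [h67'])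
    obtain ⟨p, i, hc⟩ := D5 f hdvd h67f
    have hM : (fun t => 2*(f t : ℤ)-1) = fun t => 2*m t+1 := by
      funext t; rw [hft t]
    rw [hM] at hc
    refine Set.mem_iUnion.mpr ⟨p, ?_⟩
    rcases hc with hc | hc
    · refine Or.inl ⟨i, ?_⟩
      funext t
      have h := congrFun hc t
      show (Nmat p i t : ℝ)/2 = v t
      rw [← h, hm t]; push_cast; ring
    · refine Or.inr ⟨i, ?_⟩
      funext t
      have h' : Nmat p i t = -(2*m t+1) := by
        have := congrFun hc t; simp only [Pi.neg_apply] at this; omega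
      show -((Nmat p i t : ℝ)/2) = v t
      rw [h', hm t]; push_cast; ring

lemma frame_card {S : Set (Fin 8 → ℝ)} (h : Is2FrameR 7 S) : S.Finite ∧ S.ncard = 14 := by
  obtain ⟨v, hip, rfl⟩ := h
  have hvne : ∀ i j : Fin 7, v i ≠ -(v j) := by
    intro i j he
    have h1 := hip i j
    have h2 := hip j j
    rw [if_pos rfl] at h2
    rw [he] at h1
    have h3 : ∑ t, (-(v j)) t * v j t = -∑ t, v j t * v j t := by
      rw [← Finset.sum_neg_distrib]
      exact Finset.sum_congr rfl fun t _ => by simp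
    rw [h3, h2] at h1
    split_ifs at h1 <;> norm_num at h1
  have hvinj : Function.Injective v := by
    intro i j he
    by_contra hne
    have h1 := hip i j
    rw [if_neg hne, he] at h1
    have h2 := hip j j
    rw [if_pos rfl, h1] at h2
    norm_num at h2
  have hinj : Function.Injective (Sum.elim v (fun i => -(v i)) : Fin 7 ⊕ Fin 7 → _) := by
    rintro (i | i) (j | j) he <;> simp only [Sum.elim_inl, Sum.elim_inr] at he
    · exact congrArg Sum.inl (hvinj he)
    · exact absurd he (hvne i j)
    · exact absurd he.symm (hvne j i)
    · exact congrArg Sum.inr (hvinj (neg_injective he))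
  constructor
  · exact (Set.finite_range _).union (Set.finite_range _)
  · have hre : Set.range v ∪ (Set.range fun i => -(v i))
        = Set.range (Sum.elim v fun i => -(v i)) := (Set.Sum.elim_range _ _).symm
    rw [hre, ← Set.image_univ, Set.ncard_image_of_injective _ hinj]
    simp [Set.ncard_univ]

theorem stmt12 :
    (∃ F : Fin 9 → Set (Fin 8 → ℝ),
      (∀ i j, i ≠ j → Disjoint (F i) (F j)) ∧
      (⋃ i, F i) = {v ∈ E8Roots | v 6 = v 7} ∧
      ∀ i, Is2FrameR 7 (F i)) ∧
    (∀ n : ℕ, ∀ G : Fin n → Set (Fin 8 → ℝ),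
      (∀ i j, i ≠ j → Disjoint (G i) (G j)) →
      (∀ i, G i ⊆ {v ∈ E8Roots | v 6 = v 7}) →
      (∀ i, Is2FrameR 7 (G i)) →
      n ≤ 9) := by
  have hU : (⋃ a, Ff a) = {v ∈ E8Roots | v 6 = v 7} := by
    apply Set.Subset.antisymm
    · intro x hx
      obtain ⟨a, hx⟩ := Set.mem_iUnion.mp hx
      exact Ff_sub a hx
    · intro v hv
      exact root_mem v hv.1 hv.2
  constructor
  · exact ⟨Ff, Ff_disj, hU, Ff_frame⟩
  · intro n G hdisj hsub hframe
    set R : Set (Fin 8 → ℝ) := {v ∈ E8Roots | v 6 = v 7} with hR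
    have hRfin : R.Finite := by
      rw [← hU]
      exact Set.finite_iUnion fun a => (Set.finite_range _).union (Set.finite_range _)
    -- upper bound on |R|
    set U : Fin 9 × (Fin 7 ⊕ Fin 7) → (Fin 8 → ℝ) :=
      fun p => Sum.elim (Vv p.1) (fun i => -(Vv p.1 i)) p.2 with hUdef
    have hRsub : R ⊆ Set.range U := by
      rw [← hU]
      rintro x hx
      obtain ⟨a, hx⟩ := Set.mem_iUnion.mp hx
      rcases hx with ⟨i, rfl⟩ | ⟨i, rfl⟩
      · exact ⟨(a, Sum.inl i), rfl⟩
      · exact ⟨(a, Sum.inr i), rfl⟩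
    have hR126 : R.ncard ≤ 126 := by
      calc R.ncard ≤ (Set.range U).ncard :=
            Set.ncard_le_ncard hRsub (Set.finite_range U)
        _ = (U '' Set.univ).ncard := by rw [Set.image_univ]
        _ ≤ (Set.univ : Set (Fin 9 × (Fin 7 ⊕ Fin 7))).ncard :=
            Set.ncard_image_le Set.finite_univ
        _ = 126 := by simp [Set.ncard_univ]
    -- lower bound
    have hGfin : ∀ i, (G i).Finite := fun i => (frame_card (hframe i)).1
    set t : Fin n → Finset (Fin 8 → ℝ) := fun i => (hGfin i).toFinset with ht
    have htd : ∀ i ∈ Finset.univ, ∀ j ∈ Finset.univ, i ≠ j → Disjoint (t i) (t j) := by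
      intro i _ j _ hij
      simp only [ht, Set.Finite.disjoint_toFinset]
      exact hdisj i j hij
    have hcard := Finset.card_biUnion htd
    have ht14 : ∀ i, (t i).card = 14 := by
      intro i
      have h := (frame_card (hframe i)).2
      rwa [Set.ncard_eq_toFinset_card _ (hGfin i)] at h
    have hsub2 : ((Finset.univ.biUnion t : Finset (Fin 8 → ℝ)) : Set (Fin 8 → ℝ)) ⊆ R := by
      intro x hx
      simp only [Finset.coe_biUnion, Finset.coe_univ, Set.mem_iUnion, Finset.mem_coe,
        Set.mem_univ, Set.iUnion_true, ht, Set.Finite.mem_toFinset] at hx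
      obtain ⟨i, hi⟩ := hx
      exact hsub i hi
    have hle : (Finset.univ.biUnion t).card ≤ R.ncard := by
      rw [← Set.ncard_coe_finset]
      exact Set.ncard_le_ncard hsub2 hRfin
    rw [hcard] at hle
    simp only [ht14, Finset.sum_const, Finset.card_univ, Fintype.card_fin, smul_eq_mul] at hle
    omega
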